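/- arXiv:1912.11254 — 2 statements merged into one kernel-verified Lean document; each statement's English description precedes it below -/
import Mathlib

section
/- Let τ₁ satisfy τ₁ tanh τ₁ = 1. Then φ(x) = tanh τ₁ − x tanh(τ₁ x) satisfies φ'' + λ e^u φ = 0 on (-1,1) with φ(±1) = 0, where λ = 2τ₁²/cosh²(τ₁) and u(x) = 2 log(cosh τ₁/cosh(τ₁ x)); moreover φ(x) > 0 for −1 < x < 1. -/
/-!
Write `t = tanh (τ₁ x)`. Since `tanh' = 1 - tanh ^ 2`, the function `x ↦ c - x t` has second
derivative `-2τ₁ (1 - t²) (1 - τ₁ x t)`, while `λ e^u = 2τ₁² / cosh² (τ₁ x) = 2τ₁² (1 - t²)`.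
The `x t` terms cancel in `φ'' + λ e^u φ`, leaving `2τ₁ (1 - t²) (τ₁ c - 1)`, which vanishes
for `c = tanh τ₁` exactly by the defining equation of `τ₁`. Positivity follows from
`x tanh (τ₁ x) = |x| tanh (τ₁ |x|) ≤ tanh (τ₁ |x|) < tanh τ₁` by monotonicity of `tanh`.
-/

open Real Set

namespace Real

theorem one_sub_tanh_sq (x : ℝ) : 1 - tanh x ^ 2 = (cosh x ^ 2)⁻¹ := by
  have := cosh_pos x
  rw [tanh_eq_sinh_div_cosh]
  field_simp
  linear_combination cosh_sq_sub_sinh_sq x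

theorem hasDerivAt_tanh (x : ℝ) : HasDerivAt tanh (1 - tanh x ^ 2) x := by
  have hquot : (cosh x * cosh x - sinh x * sinh x) / cosh x ^ 2 = 1 - tanh x ^ 2 := by
    rw [one_sub_tanh_sq, ← sq, ← sq, cosh_sq_sub_sinh_sq, one_div]
  rw [← hquot, show tanh = fun y => sinh y / cosh y from funext tanh_eq_sinh_div_cosh]
  exact (hasDerivAt_sinh x).div (hasDerivAt_cosh x) (cosh_pos x).ne'

theorem tanh_strictMono : StrictMono tanh :=
  strictMono_of_hasDerivAt_pos hasDerivAt_tanh fun x => sub_pos.2 (tanh_sq_lt_one x)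

theorem tanh_nonneg {x : ℝ} (hx : 0 ≤ x) : 0 ≤ tanh x :=
  tanh_zero ▸ tanh_strictMono.monotone hx

theorem exp_two_mul_log {r : ℝ} (hr : 0 < r) : exp (2 * log r) = r ^ 2 := by
  exact_mod_cast (exp_nat_mul (log r) 2).trans (by rw [exp_log hr])

end Real

section GelfandEigenfunction

variable (τ c : ℝ)

theorem hasDerivAt_tanh_mul (x : ℝ) :
    HasDerivAt (fun y => tanh (τ * y)) ((1 - tanh (τ * x) ^ 2) * τ) x := by
  have hinner : HasDerivAt (fun y => τ * y) τ x := by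
    simpa using (hasDerivAt_id x).const_mul τ
  exact (hasDerivAt_tanh (τ * x)).comp x hinner

theorem hasDerivAt_mul_tanh_mul (x : ℝ) :
    HasDerivAt (fun y => y * tanh (τ * y))
      (tanh (τ * x) + τ * x * (1 - tanh (τ * x) ^ 2)) x := by
  refine ((hasDerivAt_id x).mul (hasDerivAt_tanh_mul τ x)).congr_deriv ?_
  simp only [id_eq]
  ring

theorem hasDerivAt_tanh_mul_add_mul_one_sub_tanh_sq (x : ℝ) :
    HasDerivAt (fun y => tanh (τ * y) + τ * y * (1 - tanh (τ * y) ^ 2))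
      (2 * τ * (1 - tanh (τ * x) ^ 2) * (1 - τ * x * tanh (τ * x))) x := by
  have hinner : HasDerivAt (fun y => τ * y) τ x := by
    simpa using (hasDerivAt_id x).const_mul τ
  have htanh := hasDerivAt_tanh_mul τ x
  refine (htanh.add (hinner.mul ((htanh.pow 2).const_sub 1))).congr_deriv ?_
  simp only [Nat.cast_ofNat, Pi.pow_apply]
  ring

theorem deriv_deriv_sub_mul_tanh_mul (x : ℝ) :
    deriv (deriv fun y => c - y * tanh (τ * y)) x =
      -(2 * τ * (1 - tanh (τ * x) ^ 2) * (1 - τ * x * tanh (τ * x))) := by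
  have hderiv : deriv (fun y => c - y * tanh (τ * y)) =
      fun y => -(tanh (τ * y) + τ * y * (1 - tanh (τ * y) ^ 2)) := by
    funext y
    rw [((hasDerivAt_mul_tanh_mul τ y).const_sub c).deriv]
  rw [hderiv]
  exact (hasDerivAt_tanh_mul_add_mul_one_sub_tanh_sq τ x).neg.deriv

theorem deriv_deriv_add_mul_sub_mul_tanh_mul (x : ℝ) :
    deriv (deriv fun y => c - y * tanh (τ * y)) x +
        2 * τ ^ 2 * (1 - tanh (τ * x) ^ 2) * (c - x * tanh (τ * x)) =
      2 * τ * (1 - tanh (τ * x) ^ 2) * (τ * c - 1) := by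
  rw [deriv_deriv_sub_mul_tanh_mul]
  ring

theorem mul_tanh_mul_lt_tanh {τ x : ℝ} (hτ : 0 < τ) (hx : |x| < 1) :
    x * tanh (τ * x) < tanh τ := by
  have heven : x * tanh (τ * x) = |x| * tanh (τ * |x|) := by
    rcases abs_cases x with ⟨habs, -⟩ | ⟨habs, -⟩ <;> simp [habs, tanh_neg]
  have hnonneg : 0 ≤ tanh (τ * |x|) := tanh_nonneg (by positivity)
  calc x * tanh (τ * x) = |x| * tanh (τ * |x|) := heven
    _ ≤ tanh (τ * |x|) := mul_le_of_le_one_left hnonneg hx.le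
    _ < tanh τ := tanh_strictMono (mul_lt_of_lt_one_right hτ hx)

end GelfandEigenfunction

theorem eigenfunction_zero_eigenvalue (τ₁ : ℝ) (hτ₁ : 0 < τ₁)
    (h1 : τ₁ * Real.tanh τ₁ = 1)
    (lam : ℝ) (hlam : lam = 2 * τ₁ ^ 2 / Real.cosh τ₁ ^ 2)
    (u : ℝ → ℝ) (hu : ∀ x, u x = 2 * Real.log (Real.cosh τ₁ / Real.cosh (τ₁ * x)))
    (φ : ℝ → ℝ) (hφ : ∀ x, φ x = Real.tanh τ₁ - x * Real.tanh (τ₁ * x)) :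
    (∀ x ∈ Set.Ioo (-1 : ℝ) 1, deriv (deriv φ) x + lam * Real.exp (u x) * φ x = 0) ∧
    φ (-1) = 0 ∧ φ 1 = 0 ∧
    (∀ x ∈ Set.Ioo (-1 : ℝ) 1, 0 < φ x) := by
  obtain rfl : φ = fun x => tanh τ₁ - x * tanh (τ₁ * x) := funext hφ
  have hweight : ∀ x, lam * exp (u x) = 2 * τ₁ ^ 2 * (1 - tanh (τ₁ * x) ^ 2) := fun x => by
    have hcosh := cosh_pos τ₁
    rw [hlam, hu, exp_two_mul_log (div_pos hcosh (cosh_pos _)), one_sub_tanh_sq]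
    field_simp
  refine ⟨fun x _ => ?_, by simp [tanh_neg], by simp, fun x hx => ?_⟩
  · rw [hweight, deriv_deriv_add_mul_sub_mul_tanh_mul, h1, sub_self, mul_zero]
  · exact sub_pos.2 (mul_tanh_mul_lt_tanh hτ₁ (abs_lt.2 hx))
end

section
/- Let τ > τ₁ and let ν(τ) > 0 be the unique positive solution of tanh ν = ν/(τ tanh τ). Then ν(τ) → ∞ as τ → ∞, and moreover ν(τ)/τ → 1 as τ → ∞. -/
open Real Filter Topology

/-! For `x ≥ 0` one has `x / (1 + x) ≤ tanh x < 1`. Applied to `tanh ν = ν / c` with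
`c = τ tanh τ`, this traps `ν` between `c - 1` and `c`; since `tanh τ → 1`, both `c → ∞` and
`c / τ → 1`. -/

namespace Real

theorem div_one_add_le_tanh {x : ℝ} (hx : 0 ≤ x) : x / (1 + x) ≤ tanh x := by
  have htanh : tanh x = (exp x ^ 2 - 1) / (exp x ^ 2 + 1) := by
    rw [tanh_eq, exp_neg]
    field_simp
  -- `tanh x = t / (t + 2)` with `t = exp (2x) - 1 ≥ 2x`, and `t ↦ t / (t + 2)` is increasing
  have hsq : 1 + 2 * x ≤ exp x ^ 2 := by
    rw [← exp_nat_mul]; push_cast; linarith [add_one_le_exp (2 * x)]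
  rw [htanh, div_le_div_iff₀ (by linarith) (by positivity)]
  nlinarith

theorem tanh_pos {x : ℝ} (hx : 0 < x) : 0 < tanh x :=
  (div_pos hx (by linarith)).trans_le (div_one_add_le_tanh hx.le)

theorem tendsto_tanh_atTop : Tendsto tanh atTop (𝓝 1) := by
  have hlower : Tendsto (fun x : ℝ => 1 - (1 + x)⁻¹) atTop (𝓝 1) := by
    simpa using tendsto_const_nhds.sub
      (tendsto_inv_atTop_zero.comp (tendsto_atTop_add_const_left atTop (1 : ℝ) tendsto_id))
  refine tendsto_of_tendsto_of_tendsto_of_le_of_le' hlower tendsto_const_nhds ?_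
    (Eventually.of_forall fun x => (tanh_lt_one x).le)
  filter_upwards [eventually_ge_atTop 0] with x hx
  calc 1 - (1 + x)⁻¹ = x / (1 + x) := by field_simp; ring
    _ ≤ tanh x := div_one_add_le_tanh hx

theorem lt_of_tanh_eq_div {ν c : ℝ} (hc : 0 < c) (h : tanh ν = ν / c) : ν < c := by
  rw [← div_lt_one hc, ← h]
  exact tanh_lt_one ν

-- `ν / (1 + ν) ≤ tanh ν = ν / c`
theorem sub_one_le_of_tanh_eq_div {ν c : ℝ} (hν : 0 < ν) (hc : 0 < c) (h : tanh ν = ν / c) :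
    c - 1 ≤ ν := by
  have hle := h ▸ div_one_add_le_tanh hν.le
  rw [div_le_div_iff_of_pos_left hν (by linarith) hc] at hle
  linarith

end Real

theorem nu_asymptotics_general (τ₁ : ℝ)
    (ν : ℝ → ℝ)
    (hν : ∀ τ : ℝ, τ₁ < τ → 0 < ν τ ∧ Real.tanh (ν τ) = ν τ / (τ * Real.tanh τ)) :
    Filter.Tendsto ν Filter.atTop Filter.atTop ∧
    Filter.Tendsto (fun τ => ν τ / τ) Filter.atTop (nhds 1) := by
  have hbounds : ∀ᶠ τ in atTop, 0 < τ ∧ τ * tanh τ - 1 ≤ ν τ ∧ ν τ ≤ τ * tanh τ := by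
    filter_upwards [eventually_gt_atTop τ₁, eventually_gt_atTop 0] with τ hτ₁ hτ
    obtain ⟨hνpos, hνeq⟩ := hν τ hτ₁
    have hc : 0 < τ * tanh τ := mul_pos hτ (tanh_pos hτ)
    exact ⟨hτ, sub_one_le_of_tanh_eq_div hνpos hc hνeq, (lt_of_tanh_eq_div hc hνeq).le⟩
  have hc : Tendsto (fun τ => τ * tanh τ) atTop atTop :=
    tendsto_id.atTop_mul_pos one_pos tendsto_tanh_atTop
  refine ⟨tendsto_atTop_mono' _ (hbounds.mono fun τ h => h.2.1)
    (tendsto_atTop_add_const_right _ (-1) hc), ?_⟩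
  have hlower : Tendsto (fun τ : ℝ => tanh τ - τ⁻¹) atTop (𝓝 1) := by
    simpa using tendsto_tanh_atTop.sub tendsto_inv_atTop_zero
  refine tendsto_of_tendsto_of_tendsto_of_le_of_le' hlower tendsto_tanh_atTop ?_ ?_
  · filter_upwards [hbounds] with τ ⟨hτ, hlow, _⟩
    calc tanh τ - τ⁻¹ = (τ * tanh τ - 1) / τ := by field_simp
      _ ≤ ν τ / τ := by gcongr
  · filter_upwards [hbounds] with τ ⟨hτ, _, hupp⟩
    rwa [div_le_iff₀ hτ, mul_comm]

theorem nu_asymptotics (τ₁ : ℝ) (hτ₁ : 0 < τ₁) (h1 : τ₁ * Real.tanh τ₁ = 1)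
    (ν : ℝ → ℝ)
    (hν : ∀ τ : ℝ, τ₁ < τ → 0 < ν τ ∧ Real.tanh (ν τ) = ν τ / (τ * Real.tanh τ)) :
    Filter.Tendsto ν Filter.atTop Filter.atTop ∧
    Filter.Tendsto (fun τ => ν τ / τ) Filter.atTop (nhds 1) :=
  nu_asymptotics_general τ₁ ν hν
end
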